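/- Let n be a natural number and τ a permutation of Fin n. Let q : PMF (Set (Set (Fin n))) be the pushforward of the uniform distribution on Equiv.Perm (Fin n) under the map σ ↦ 𝒢[σ⁻¹ * τ * σ], i.e., q := PMF.map (fun σ => 𝒢[σ⁻¹ * τ * σ]) (PMF.uniformOfFintype (Equiv.Perm (Fin n))). Then for every permutation ν of Fin n and every 𝒢 : Set (Set (Fin n)), q 𝒢 = q ((fun B => ν '' B) '' 𝒢). (The grouping specified by a uniformly random conjugate of τ assigns equal probability to any grouping and any relabeling of it.) -/

import Mathlib

open scoped ENNReal

/-- The grouping (orbit partition) specified by a permutation. -/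
def grouping {n : ℕ} (π : Equiv.Perm (Fin n)) : Set (Set (Fin n)) :=
  Set.range (fun i => {x | Equiv.Perm.SameCycle π i x})

/-!
Conjugating by `ν` relabels the orbits of a permutation by `ν`, and `σ ↦ σ * ν⁻¹` turns the
conjugate `σ⁻¹ τ σ` into `ν (σ⁻¹ τ σ) ν⁻¹`. Since the uniform distribution on permutations is
invariant under right multiplication, the law `q` of the grouping is invariant under relabeling by
`ν`, which is injective on groupings.
-/

namespace PMF

theorem map_apply_of_injective {α β : Type*} {g : α → β} (hg : Function.Injective g)
    (p : PMF α) (a : α) : p.map g (g a) = p a := by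
  rw [map_apply, tsum_eq_single a]
  · simp
  · intro a' ha'
    simp [hg.ne_iff, Ne.symm ha']

theorem map_uniformOfFintype_equiv {α : Type*} [Fintype α] [Nonempty α] (e : α ≃ α) :
    (uniformOfFintype α).map e = uniformOfFintype α := by
  ext a
  rw [← e.apply_symm_apply a, map_apply_of_injective e.injective]
  simp

end PMF

theorem Equiv.Perm.setOf_sameCycle_conj {α : Type*} (ν π : Equiv.Perm α) (i : α) :
    {x | (ν * π * ν⁻¹).SameCycle (ν i) x} = ν '' {x | π.SameCycle i x} := by
  ext x
  simp [Equiv.image_eq_preimage_symm, Equiv.Perm.sameCycle_conj]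

theorem grouping_conj {n : ℕ} (ν π : Equiv.Perm (Fin n)) :
    grouping (ν * π * ν⁻¹) = (fun B => ⇑ν '' B) '' grouping π := by
  rw [grouping, grouping, ← Set.range_comp, ← ν.surjective.range_comp]
  simp only [Function.comp_def, Equiv.Perm.setOf_sameCycle_conj]

theorem pmf_grouping_relabel_invariant {n : ℕ} (τ : Equiv.Perm (Fin n))
    (q : PMF (Set (Set (Fin n))))
    (hq : q = PMF.map (fun σ => grouping (σ⁻¹ * τ * σ))
      (PMF.uniformOfFintype (Equiv.Perm (Fin n))))
    (ν : Equiv.Perm (Fin n)) (𝒢 : Set (Set (Fin n))) :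
    q 𝒢 = q ((fun B => ⇑ν '' B) '' 𝒢) := by
  set relabel : Set (Set (Fin n)) → Set (Set (Fin n)) := Set.image (fun B => ⇑ν '' B)
  have hrelabel : Function.Injective relabel :=
    Set.image_injective.mpr (Set.image_injective.mpr ν.injective)
  have hconj (σ : Equiv.Perm (Fin n)) :
      (σ * ν⁻¹)⁻¹ * τ * (σ * ν⁻¹) = ν * (σ⁻¹ * τ * σ) * ν⁻¹ := by group
  have hq_relabel : q.map relabel = q := by
    rw [hq, PMF.map_comp]
    conv_rhs => rw [← PMF.map_uniformOfFintype_equiv (Equiv.mulRight ν⁻¹), PMF.map_comp]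
    congr 1
    funext σ
    simp only [Function.comp_apply, Equiv.coe_mulRight, hconj, grouping_conj, relabel]
  rw [← hq_relabel, PMF.map_apply_of_injective hrelabel, hq_relabel]
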